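/- arXiv:2412.03680 — 6 statements merged into one kernel-verified Lean document; each statement's English description precedes it below -/
import Mathlib

section
/- For every natural number N > 0 and every divisor d with 1 ≤ d < 2^N, the full magic number m = ⌈2^(N+p)/d⌉, where p = ⌈log₂ d⌉, satisfies 2^N ≤ m < 2^(N+1). -/
theorem stmt2 (N : ℕ) (hN : 0 < N) (d : ℕ) (hd1 : 1 ≤ d) (hd2 : d < 2 ^ N) :
    (2 : ℤ) ^ N ≤ ⌈(2 : ℚ) ^ (N + Nat.clog 2 d) / d⌉ ∧
      ⌈(2 : ℚ) ^ (N + Nat.clog 2 d) / d⌉ < 2 ^ (N + 1) := by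
  set p := Nat.clog 2 d with hp
  have hdp : d ≤ 2 ^ p := Nat.le_pow_clog one_lt_two d
  have hd0 : (0:ℚ) < d := by exact_mod_cast hd1
  constructor
  · have h1 : (2:ℚ)^N ≤ 2^(N+p)/(d:ℚ) := by
      rw [le_div_iff₀ hd0, pow_add]
      have hdc : (d:ℚ) ≤ 2^p := by exact_mod_cast hdp
      have hposN : (0:ℚ) < 2^N := by positivity
      nlinarith
    have h2 := Int.le_ceil ((2:ℚ)^(N+p)/d)
    exact_mod_cast h1.trans h2
  · have key : 2^(N+p) + d ≤ d * 2^(N+1) := by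
      rcases eq_or_lt_of_le hd1 with h | h
      · have hp0 : p = 0 := by simp [hp, ← h]
        have h1 : (1:ℕ) ≤ 2^N := Nat.one_le_two_pow
        rw [hp0, Nat.add_zero, ← h, pow_succ]
        omega
      · have hp1 : 1 ≤ p := Nat.clog_pos one_lt_two h
        have hlow : 2^(p-1) < d := Nat.pow_pred_clog_lt_self one_lt_two h
        have heq : 2^(p-1) * 2^(N+1) = 2^(N+p) := by
          rw [← pow_add]
          congr 1
          omega
        have hd2' : d ≤ 2^(N+1) := by
          have : 2^N ≤ 2^(N+1) := Nat.pow_le_pow_right (by norm_num) (by omega)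
          omega
        calc 2^(N+p) + d ≤ 2^(p-1) * 2^(N+1) + 2^(N+1) := by omega
          _ = (2^(p-1) + 1) * 2^(N+1) := by ring
          _ ≤ d * 2^(N+1) := Nat.mul_le_mul_right _ (by omega)
    have h2 : (2:ℚ)^(N+p)/(d:ℚ) ≤ ((2^(N+1) - 1 : ℤ) : ℚ) := by
      rw [div_le_iff₀ hd0]
      have : ((2:ℚ)^(N+p) + d) ≤ d * 2^(N+1) := by exact_mod_cast key
      push_cast
      nlinarith
    have h3 := Int.ceil_le.mpr h2
    omega
end

section
/- For every natural number N > 0, divisor d with 1 ≤ d < 2^N, and dividend n with 0 ≤ n < 2^N, letting p = ⌈log₂ d⌉ and m = ⌈2^(N+p)/d⌉, we have ⌊n/d⌋ = ⌊m·n / 2^(N+p)⌋. -/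
theorem stmt3 (N : ℕ) (hN : 0 < N) (d : ℕ) (hd1 : 1 ≤ d) (hd2 : d < 2 ^ N)
    (n : ℕ) (hn : n < 2 ^ N) (m : ℕ)
    (hm : (m : ℤ) = ⌈(2 : ℚ) ^ (N + Nat.clog 2 d) / d⌉) :
    n / d = m * n / 2 ^ (N + Nat.clog 2 d) := by
  set K := N + Nat.clog 2 d with hK
  have hd0 : 0 < d := hd1
  have hdQ : (0:ℚ) < d := by exact_mod_cast hd0
  have h1 : ((2:ℚ)^K) ≤ (m:ℚ) * d := by
    have h := Int.le_ceil ((2:ℚ)^K / d)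
    rw [← hm] at h
    push_cast at h
    rw [div_le_iff₀ hdQ] at h
    exact h
  have h2 : (m:ℚ) * d < 2^K + d := by
    have h := Int.ceil_lt_add_one ((2:ℚ)^K / d)
    rw [← hm] at h
    push_cast at h
    nlinarith [mul_lt_mul_of_pos_right h hdQ, div_mul_cancel₀ ((2:ℚ)^K) hdQ.ne']
  have hmd1 : 2^K ≤ m * d := by exact_mod_cast h1
  have hmd2 : m * d < 2^K + d := by exact_mod_cast h2
  have hdp : d ≤ 2 ^ Nat.clog 2 d := Nat.le_pow_clog one_lt_two d
  have hnd : n * d < 2^K := by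
    calc n * d < 2^N * 2^(Nat.clog 2 d) :=
      Nat.mul_lt_mul_of_lt_of_le hn hdp (by positivity)
    _ = 2^K := by rw [hK, pow_add]
  rcases Nat.eq_zero_or_pos n with rfl | hn0
  · simp
  symm
  apply Nat.div_eq_of_lt_le
  · -- n/d * 2^K ≤ m * n
    have hq : n / d * d ≤ n := Nat.div_mul_le_self n d
    have step : n / d * 2^K * d ≤ m * n * d := by
      nlinarith [Nat.mul_le_mul_right (2^K) hq, Nat.mul_le_mul_left n hmd1]
    exact Nat.le_of_mul_le_mul_right step hd0
  · -- m * n < (n/d + 1) * 2^K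
    have hmod : d * (n / d) + n % d = n := Nat.div_add_mod n d
    have hr : n % d < d := Nat.mod_lt n hd0
    have A : n * (m * d + 1) ≤ n * (2^K + d) :=
      Nat.mul_le_mul_left n (Nat.succ_le_of_lt hmd2)
    have B2 : (d * (n / d) + n % d) * 2^K = n * 2^K := by rw [hmod]
    have E : (n % d + 1) * 2^K ≤ d * 2^K :=
      Nat.mul_le_mul_right (2^K) (Nat.succ_le_of_lt hr)
    have step : m * n * d < (n / d + 1) * 2^K * d := by nlinarith [A, B2, E, hnd, hn0]
    exact Nat.lt_of_mul_lt_mul_right step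
end

section
/- For every natural number N > 0, divisor d with 1 ≤ d < 2^N, and dividend n with 0 ≤ n < 2^N, letting p = ⌈log₂ d⌉, m = ⌈2^(N+p)/d⌉, m_lo = m - 2^N, and q = ⌊m_lo · n / 2^N⌋, we have ⌊n/d⌋ = ⌊(n + q)/2^p⌋. -/
/-!
With `P = 2 ^ (N + p)` the ceiling gives `m * d = P + e` with `0 ≤ e < d`, so
`m * n / P = n / d + e * n / (d * P)` over ℚ. As `d ≤ 2 ^ p` and `n < 2 ^ N`, the error
`e * n / (d * P)` is below `1 / d`, while `n / d` lies at least `1 / d` below the next integer;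
hence `⌊m * n / P⌋ = ⌊n / d⌋`. The left side is the expression of the theorem, because
`n + ⌊(m - 2 ^ N) * n / 2 ^ N⌋ = ⌊m * n / 2 ^ N⌋` and nested floor divisions combine.
-/

theorem Nat.mul_div_eq_div_of_le_mul_of_mul_lt_add {n d m P : ℕ} (hP : P ≤ m * d)
    (hmd : m * d < P + d) (hn : d * n < P) : m * n / P = n / d := by
  have hd : 0 < d := Nat.pos_of_ne_zero (by rintro rfl; omega)
  have hmod := Nat.mod_lt n hd
  apply Nat.div_eq_of_lt_le
  · calc n / d * P ≤ n / d * (m * d) := Nat.mul_le_mul_left _ hP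
      _ = m * (d * (n / d)) := by ring
      _ ≤ m * n := Nat.mul_le_mul_left _ (Nat.mul_div_le n d)
  · refine Nat.lt_of_mul_lt_mul_right (a := d) ?_
    calc m * n * d = m * d * n := by ring
      _ ≤ P * n + d * n := by nlinarith
      _ < P * (n + (d - n % d)) := by nlinarith [Nat.sub_pos_of_lt hmod]
      _ = (n / d + 1) * P * d := by
        rw [show n + (d - n % d) = d * (n / d) + d by have := Nat.div_add_mod n d; omega]
        ring

theorem le_mul_and_mul_lt_add_of_eq_ceil_div {P d m : ℕ} (hd : 0 < d)
    (hm : (m : ℤ) = ⌈(P : ℚ) / d⌉) : P ≤ m * d ∧ m * d < P + d := by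
  obtain ⟨hlt, hle⟩ := Int.ceil_eq_iff.mp hm.symm
  have hdQ : (0 : ℚ) < d := by exact_mod_cast hd
  push_cast at hlt hle
  rw [lt_div_iff₀ hdQ] at hlt
  rw [div_le_iff₀ hdQ] at hle
  constructor
  · exact_mod_cast hle
  · have : (m * d : ℚ) < P + d := by linarith
    exact_mod_cast this

theorem Nat.add_sub_mul_div_eq_mul_div {B m : ℕ} (n : ℕ) (hB : 0 < B) (hm : B ≤ m) :
    n + (m - B) * n / B = m * n / B := by
  rw [add_comm, ← Nat.add_mul_div_right _ _ hB, Nat.sub_mul, mul_comm n B,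
    Nat.sub_add_cancel (Nat.mul_le_mul_right n hm)]

theorem stmt6_general (N : ℕ) (d : ℕ) (hd1 : 1 ≤ d)
    (n : ℕ) (hn : n < 2 ^ N) (m : ℕ)
    (hm : (m : ℤ) = ⌈(2 : ℚ) ^ (N + Nat.clog 2 d) / d⌉) :
    n / d = (n + (m - 2 ^ N) * n / 2 ^ N) / 2 ^ (Nat.clog 2 d) := by
  set p := Nat.clog 2 d
  have hdp : d ≤ 2 ^ p := Nat.le_pow_clog one_lt_two d
  obtain ⟨hlo, hhi⟩ := le_mul_and_mul_lt_add_of_eq_ceil_div (P := 2 ^ (N + p)) hd1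
    (by exact_mod_cast hm)
  have hmN : 2 ^ N ≤ m := by
    refine Nat.le_of_mul_le_mul_right ?_ hd1
    calc 2 ^ N * d ≤ 2 ^ N * 2 ^ p := Nat.mul_le_mul_left _ hdp
      _ = 2 ^ (N + p) := (pow_add 2 N p).symm
      _ ≤ m * d := hlo
  have hdn : d * n < 2 ^ (N + p) := by
    rw [pow_add, mul_comm (2 ^ N)]
    exact Nat.mul_lt_mul_of_le_of_lt hdp hn (by positivity)
  rw [Nat.add_sub_mul_div_eq_mul_div n (by positivity) hmN, Nat.div_div_eq_div_mul, ← pow_add]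
  exact (Nat.mul_div_eq_div_of_le_mul_of_mul_lt_add hlo hhi hdn).symm

theorem stmt6 (N : ℕ) (hN : 0 < N) (d : ℕ) (hd1 : 1 ≤ d) (hd2 : d < 2 ^ N)
    (n : ℕ) (hn : n < 2 ^ N) (m : ℕ)
    (hm : (m : ℤ) = ⌈(2 : ℚ) ^ (N + Nat.clog 2 d) / d⌉) :
    n / d = (n + (m - 2 ^ N) * n / 2 ^ N) / 2 ^ (Nat.clog 2 d) :=
  stmt6_general N d hd1 n hn m hm
end

section
/- For every natural number N > 0, divisor d with 1 ≤ d < 2^N, and dividend n with 0 ≤ n < 2^N, letting p = ⌈log₂ d⌉, m = ⌈2^(N+p)/d⌉, m_lo = m - 2^N, and q = ⌊m_lo · n / 2^N⌋, we have q ≤ n (so n - q does not underflow). -/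
theorem stmt8 (N : ℕ) (hN : 0 < N) (d : ℕ) (hd1 : 1 ≤ d) (hd2 : d < 2 ^ N)
    (n : ℕ) (hn : n < 2 ^ N) (m : ℕ)
    (hm : (m : ℤ) = ⌈(2 : ℚ) ^ (N + Nat.clog 2 d) / d⌉) :
    (m - 2 ^ N) * n / 2 ^ N ≤ n := by
  set p := Nat.clog 2 d with hp
  have hpd : 2 ^ p ≤ 2 * d := by
    rcases eq_or_lt_of_le hd1 with h | h
    · simp [hp, ← h]
    · have h1 : 2 ^ (p - 1) < d := Nat.pow_pred_clog_lt_self (by norm_num) h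
      have hp1 : 1 ≤ p := Nat.clog_pos (by norm_num) h
      calc 2 ^ p = 2 * 2 ^ (p - 1) := by
            rw [← pow_succ']; congr 1; omega
        _ ≤ 2 * d := by omega
  have hm2 : m ≤ 2 ^ (N + 1) := by
    have hz : (m : ℤ) ≤ 2 ^ (N + 1) := by
      rw [hm, Int.ceil_le]
      have hd0 : (0 : ℚ) < d := by exact_mod_cast hd1
      rw [div_le_iff₀ hd0]
      have : ((2 : ℕ) ^ (N + p) : ℚ) ≤ ((2 : ℕ) ^ (N + 1) * d : ℚ) := by
        exact_mod_cast calc 2 ^ (N + p) = 2 ^ N * 2 ^ p := pow_add 2 N p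
          _ ≤ 2 ^ N * (2 * d) := Nat.mul_le_mul_left _ hpd
          _ = 2 ^ (N + 1) * d := by ring
      push_cast at this ⊢
      exact this
    exact_mod_cast hz
  calc (m - 2 ^ N) * n / 2 ^ N ≤ 2 ^ N * n / 2 ^ N :=
        Nat.div_le_div_right (Nat.mul_le_mul_right _ (by omega))
    _ = n := Nat.mul_div_cancel_left _ (by positivity)
end

section
/- For every natural number N > 1, divisor d with 1 ≤ d < 2^N, and dividend n with 0 ≤ n < 2^(N-1), letting p = ⌈log₂ d⌉, m = ⌈2^(N+p)/d⌉, m_lo = m - 2^N, and q = ⌊m_lo · n / 2^N⌋, we have n + q < 2^N (so the sum fits in an N-bit register). -/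
theorem stmt10 (N : ℕ) (hN : 1 < N) (d : ℕ) (hd1 : 1 ≤ d) (hd2 : d < 2 ^ N)
    (n : ℕ) (hn : n < 2 ^ (N - 1)) (m : ℕ)
    (hm : (m : ℤ) = ⌈(2 : ℚ) ^ (N + Nat.clog 2 d) / d⌉) :
    n + (m - 2 ^ N) * n / 2 ^ N < 2 ^ N := by
  set p := Nat.clog 2 d with hp
  have hpd : 2 ^ p ≤ 2 * d := by
    rcases eq_or_lt_of_le hd1 with h | h
    · simp [hp, ← h]
    · have h1 : 2 ^ (p - 1) < d := Nat.pow_pred_clog_lt_self (le_refl 2) h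
      have h2 : 1 ≤ p := Nat.clog_pos (by norm_num) h
      have : 2 ^ p = 2 * 2 ^ (p - 1) := by
        rw [← pow_succ']; congr 1; omega
      omega
  have hdq : (0 : ℚ) < d := by exact_mod_cast hd1
  have hq : (2 : ℚ) ^ (N + p) / d ≤ 2 ^ (N + 1) := by
    rw [div_le_iff₀ hdq, pow_add]
    have hc : (2 : ℚ) ^ p ≤ 2 * d := by exact_mod_cast hpd
    calc (2 : ℚ) ^ N * 2 ^ p ≤ 2 ^ N * (2 * d) := by
          exact mul_le_mul_of_nonneg_left hc (by positivity)
      _ = 2 ^ (N + 1) * d := by ring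
  have hmle : m ≤ 2 ^ (N + 1) := by
    have : (m : ℤ) ≤ 2 ^ (N + 1) := by
      rw [hm]
      refine Int.ceil_le.mpr ?_
      push_cast
      exact hq
    exact_mod_cast this
  have hN1 : 2 ^ (N + 1) = 2 * 2 ^ N := by rw [pow_succ]; ring
  have h1 : m - 2 ^ N ≤ 2 ^ N := by omega
  have h2 : (m - 2 ^ N) * n / 2 ^ N ≤ n := by
    calc (m - 2 ^ N) * n / 2 ^ N ≤ 2 ^ N * n / 2 ^ N :=
          Nat.div_le_div_right (Nat.mul_le_mul_right _ h1)
      _ = n := Nat.mul_div_cancel_left _ (by positivity)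
  have h3 : 2 * 2 ^ (N - 1) ≤ 2 ^ N := by
    rw [← pow_succ']
    exact Nat.pow_le_pow_right (by norm_num) (by omega)
  omega
end

section
/- For every natural number N ≥ 2, divisor d with 1 ≤ d < 2^N, letting p = ⌈log₂ d⌉, we have 2^(N+p)/d ≤ 2^(N+1) - 2 as rationals, hence ⌈2^(N+p)/d⌉ ≤ 2^(N+1) - 2. -/
theorem stmt18 (N : ℕ) (hN : 2 ≤ N) (d : ℕ) (hd1 : 1 ≤ d) (hd2 : d < 2 ^ N) :
    (2 : ℚ) ^ (N + Nat.clog 2 d) / d ≤ 2 ^ (N + 1) - 2 ∧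
      ⌈(2 : ℚ) ^ (N + Nat.clog 2 d) / d⌉ ≤ (2 : ℤ) ^ (N + 1) - 2 := by
  set p := Nat.clog 2 d with hp
  -- key natural-number inequality
  have hnat : 2 ^ (N + p) + 2 * d ≤ 2 ^ (N + 1) * d := by
    rcases eq_or_lt_of_le hd1 with h1 | h2
    · have hp0 : p = 0 := by rw [hp, ← h1]; simp
      simp only [hp0, Nat.add_zero, ← h1, Nat.mul_one]
      have h2N : 4 ≤ 2 ^ N := by
        calc 4 = 2 ^ 2 := rfl
        _ ≤ 2 ^ N := Nat.pow_le_pow_right (by norm_num) hN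
      have : 2 ^ (N + 1) = 2 * 2 ^ N := by ring
      omega
    · obtain ⟨e, rfl⟩ : ∃ e, d = e + 2 := ⟨d - 2, by omega⟩
      have hppos : 1 ≤ p := Nat.clog_pos (by norm_num) h2
      have hlt : 2 ^ (p - 1) < e + 2 := Nat.pow_pred_clog_lt_self (by norm_num) h2
      have h2p : 2 ^ p ≤ 2 * (e + 1) := by
        have hsplit : 2 ^ p = 2 * 2 ^ (p - 1) := by
          rw [← pow_succ']
          congr 1
        omega
      have hdN : e + 2 ≤ 2 ^ N := le_of_lt hd2
      have hNp : 2 ^ (N + p) = 2 ^ N * 2 ^ p := pow_add 2 N p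
      have key : 2 ^ N * 2 ^ p ≤ 2 ^ N * (2 * (e + 1)) :=
        Nat.mul_le_mul_left _ h2p
      have hpow : 2 ^ (N + 1) = 2 * 2 ^ N := by ring
      nlinarith [key, hdN]
  have hd0 : (0 : ℚ) < (d : ℚ) := by exact_mod_cast Nat.lt_of_lt_of_le Nat.zero_lt_one hd1
  have hmain : (2 : ℚ) ^ (N + p) / d ≤ 2 ^ (N + 1) - 2 := by
    rw [div_le_iff₀ hd0]
    have : ((2 ^ (N + p) + 2 * d : ℕ) : ℚ) ≤ ((2 ^ (N + 1) * d : ℕ) : ℚ) := by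
      exact_mod_cast hnat
    push_cast at this
    linarith
  refine ⟨hmain, ?_⟩
  rw [Int.ceil_le]
  push_cast
  exact hmain
end
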